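/- Let d, N ≥ 1, let f : {0,1}^d → ℤ satisfy |f(u) − f(v)| ≤ 1 whenever u and v differ in exactly one coordinate, and let F : {0,…,N}^d → ℚ be the multilinear interpolation of f. Then: (1) for all a, b ∈ {0,…,N}^d differing by 1 in exactly one coordinate, |⌊F(a)⌋ − ⌊F(b)⌋| ≤ 1; and (2) if N ≥ d and a, b lie in a common unit subcube of the grid (i.e., there exists c ∈ {0,…,N−1}^d with c_i ≤ a_i ≤ c_i + 1 and c_i ≤ b_i ≤ c_i + 1 for all i), then |⌊F(a)⌋ − ⌊F(b)⌋| ≤ 1; in particular, ⌊F⌋ takes at most two (consecutive) integer values on each unit subcube. -/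

import Mathlib

/-!
Write `t = a / N ∈ [0,1]^d`. The interpolation is affine in each coordinate `t_j`, with slope
the interpolation of the discrete derivative `f(ε[j ↦ 1]) - f(ε[j ↦ 0])`; the weights are
nonnegative and sum to `1`, so that slope lies in `[-1, 1]`. Changing the coordinates one at a
time therefore gives `|F a - F b| ≤ Σ_i |a_i - b_i| / N`, which is `1 / N` along a grid edge and
at most `d / N ≤ 1` inside a unit subcube. Numbers at distance at most `1` have floors at
distance at most `1`, and integers that are pairwise at distance at most `1` take at most two
consecutive values.
-/

noncomputable section

/-- The multilinear interpolation of `f : {0,1}^d → ℤ` on the grid `{0,…,N}^d`: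
`F(a) = Σ_{ε ∈ {0,1}^d} (Π_i w_i) · f(ε)` with `w_i = a_i/N` if `ε_i = 1` and
`w_i = 1 − a_i/N` if `ε_i = 0`. -/
def interp (d N : ℕ) (f : (Fin d → Bool) → ℤ) (a : Fin d → ℕ) : ℚ :=
  ∑ ε : Fin d → Bool,
    (∏ i : Fin d, (if ε i then (a i : ℚ) / N else 1 - (a i : ℚ) / N)) * (f ε : ℚ)

def CubeAdj {d : ℕ} (u v : Fin d → Bool) : Prop :=
  ∃ j, u j ≠ v j ∧ ∀ k, k ≠ j → u k = v k

def GridAdj {d : ℕ} (a b : Fin d → ℕ) : Prop :=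
  ∃ j, (a j = b j + 1 ∨ b j = a j + 1) ∧ ∀ k, k ≠ j → a k = b k

open Finset Function

section MultilinearExtension

theorem update_funSplitAt_symm {ι β : Type*} [DecidableEq ι] (j : ι) (b b' : β)
    (η : {i // i ≠ j} → β) :
    update ((Equiv.funSplitAt j β).symm (b, η)) j b' = (Equiv.funSplitAt j β).symm (b', η) := by
  ext i
  by_cases h : i = j
  · subst h; simp
  · simp [h]

variable {ι R : Type*} [Fintype ι] [CommRing R]

def cubeWeight (t : ι → R) (ε : ι → Bool) : R :=
  ∏ i, if ε i then t i else 1 - t i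

theorem cubeWeight_nonneg [LinearOrder R] [IsStrictOrderedRing R] {t : ι → R}
    (ht : ∀ i, t i ∈ Set.Icc 0 1) (ε : ι → Bool) : 0 ≤ cubeWeight t ε :=
  prod_nonneg fun i _ => by split_ifs <;> linarith [(ht i).1, (ht i).2]

variable [DecidableEq ι]

def multilinExt (g : (ι → Bool) → R) (t : ι → R) : R :=
  ∑ ε, cubeWeight t ε * g ε

def cubeDeriv (g : (ι → Bool) → R) (j : ι) (ε : ι → Bool) : R :=
  g (update ε j true) - g (update ε j false)

theorem sum_cubeWeight (t : ι → R) : ∑ ε, cubeWeight t ε = 1 := by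
  calc ∑ ε, cubeWeight t ε = ∏ i, ∑ b : Bool, if b then t i else 1 - t i :=
        (Fintype.prod_sum fun i (b : Bool) => if b then t i else 1 - t i).symm
    _ = 1 := by simp

theorem cubeWeight_funSplitAt_symm (t : ι → R) (j : ι) (b : Bool) (η : {i // i ≠ j} → Bool) :
    cubeWeight t ((Equiv.funSplitAt j Bool).symm (b, η)) =
      (if b then t j else 1 - t j) * cubeWeight (fun i : {i // i ≠ j} => t i) η := by
  rw [cubeWeight, Fintype.prod_eq_mul_prod_subtype_ne _ j]
  have hne (i : {i // i ≠ j}) : (i : ι) = j ↔ False := iff_false_intro i.2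
  simp [cubeWeight, Equiv.funSplitAt_symm_apply, hne]

theorem multilinExt_eq_sum_funSplitAt (g : (ι → Bool) → R) (t : ι → R) (j : ι) :
    multilinExt g t = ∑ η : {i // i ≠ j} → Bool, cubeWeight (fun i : {i // i ≠ j} => t i) η *
      (t j * g ((Equiv.funSplitAt j Bool).symm (true, η)) +
        (1 - t j) * g ((Equiv.funSplitAt j Bool).symm (false, η))) := by
  rw [multilinExt, ← (Equiv.funSplitAt j Bool).symm.sum_comp, Fintype.sum_prod_type,
    Fintype.sum_bool, ← sum_add_distrib]
  refine sum_congr rfl fun η _ => ?_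
  simp only [cubeWeight_funSplitAt_symm, if_true, Bool.false_eq_true, if_false]
  ring

theorem multilinExt_sub_of_eq_off {t s : ι → R} {j : ι} (h : ∀ i, i ≠ j → t i = s i)
    (g : (ι → Bool) → R) :
    multilinExt g t - multilinExt g s = (t j - s j) * multilinExt (cubeDeriv g j) t := by
  have hts : (fun i : {i // i ≠ j} => s i) = fun i : {i // i ≠ j} => t i :=
    funext fun i => (h i i.2).symm
  rw [multilinExt_eq_sum_funSplitAt g t j, multilinExt_eq_sum_funSplitAt g s j,
    multilinExt_eq_sum_funSplitAt _ t j, hts, ← sum_sub_distrib, mul_sum]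
  refine sum_congr rfl fun η _ => ?_
  simp only [cubeDeriv, update_funSplitAt_symm]
  ring

variable [LinearOrder R] [IsStrictOrderedRing R] {t s : ι → R} {g : (ι → Bool) → R} {C : R}

theorem abs_multilinExt_le (ht : ∀ i, t i ∈ Set.Icc 0 1) (hg : ∀ ε, |g ε| ≤ C) :
    |multilinExt g t| ≤ C :=
  calc |multilinExt g t| ≤ ∑ ε, cubeWeight t ε * |g ε| := by
        refine (abs_sum_le_sum_abs _ _).trans_eq (sum_congr rfl fun ε _ => ?_)
        rw [abs_mul, abs_of_nonneg (cubeWeight_nonneg ht ε)]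
    _ ≤ ∑ ε, cubeWeight t ε * C :=
        sum_le_sum fun ε _ => mul_le_mul_of_nonneg_left (hg ε) (cubeWeight_nonneg ht ε)
    _ = C := by rw [← sum_mul, sum_cubeWeight, one_mul]

theorem abs_multilinExt_sub_le_of_eq_off (ht : ∀ i, t i ∈ Set.Icc 0 1) {j : ι}
    (h : ∀ i, i ≠ j → t i = s i) (hg : ∀ ε, |cubeDeriv g j ε| ≤ C) :
    |multilinExt g t - multilinExt g s| ≤ C * |t j - s j| := by
  rw [multilinExt_sub_of_eq_off h, abs_mul, mul_comm]
  exact mul_le_mul_of_nonneg_right (abs_multilinExt_le ht hg) (abs_nonneg _)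

theorem abs_multilinExt_sub_le (ht : ∀ i, t i ∈ Set.Icc 0 1) (hs : ∀ i, s i ∈ Set.Icc 0 1)
    (hg : ∀ j ε, |cubeDeriv g j ε| ≤ C) :
    |multilinExt g t - multilinExt g s| ≤ C * ∑ i, |t i - s i| := by
  suffices key : ∀ S : Finset ι,
      |multilinExt g t - multilinExt g (S.piecewise s t)| ≤ C * ∑ i ∈ S, |t i - s i| by
    simpa using key univ
  intro S
  induction S using Finset.induction_on with
  | empty => simp
  | insert j S hj ih =>
    have hstep : |multilinExt g (S.piecewise s t) - multilinExt g ((insert j S).piecewise s t)|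
        ≤ C * |t j - s j| := by
      have hS (i : ι) : S.piecewise s t i ∈ Set.Icc 0 1 := S.piecewise_cases _ _ _ (hs i) (ht i)
      simpa [S.piecewise_eq_of_notMem _ _ hj] using abs_multilinExt_sub_le_of_eq_off hS
        (fun i hi => (S.piecewise_insert_of_ne s t hi).symm) (hg j)
    rw [sum_insert hj, mul_add]
    linarith [abs_sub_le (multilinExt g t) (multilinExt g (S.piecewise s t))
      (multilinExt g ((insert j S).piecewise s t))]

end MultilinearExtension

theorem abs_floor_sub_floor_le_one {α : Type*} [CommRing α] [LinearOrder α]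
    [IsStrictOrderedRing α] [FloorRing α] {x y : α} (h : |x - y| ≤ 1) : |⌊x⌋ - ⌊y⌋| ≤ 1 := by
  obtain ⟨hyx, hxy⟩ := abs_le.mp h
  have hx : ⌊x⌋ ≤ ⌊y⌋ + 1 := by rw [← Int.floor_add_one]; exact Int.floor_mono (by linarith)
  have hy : ⌊y⌋ ≤ ⌊x⌋ + 1 := by rw [← Int.floor_add_one]; exact Int.floor_mono (by linarith)
  exact abs_le.mpr ⟨by omega, by omega⟩

theorem Int.exists_eq_or_eq_add_one_of_abs_sub_le_one {α : Type*} (φ : α → ℤ) (s : Set α)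
    (h : ∀ x ∈ s, ∀ y ∈ s, |φ x - φ y| ≤ 1) : ∃ m : ℤ, ∀ x ∈ s, φ x = m ∨ φ x = m + 1 := by
  rcases s.eq_empty_or_nonempty with rfl | ⟨x₀, hx₀⟩
  · exact ⟨0, fun x hx => hx.elim⟩
  by_cases hlow : ∃ y ∈ s, φ y < φ x₀
  · obtain ⟨y, hy, hlt⟩ := hlow
    refine ⟨φ y, fun x hx => ?_⟩
    have hxy := abs_le.mp (h x hx y hy)
    have hxx₀ := abs_le.mp (h x hx x₀ hx₀)
    have hyx₀ := abs_le.mp (h y hy x₀ hx₀)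
    omega
  · push Not at hlow
    refine ⟨φ x₀, fun x hx => ?_⟩
    have hxx₀ := abs_le.mp (h x hx x₀ hx₀)
    have := hlow x hx
    omega

theorem interp_eq_multilinExt (d N : ℕ) (f : (Fin d → Bool) → ℤ) (a : Fin d → ℕ) :
    interp d N f a = multilinExt (fun ε => (f ε : ℚ)) (fun i => (a i : ℚ) / N) :=
  rfl

theorem GridAdj.sum_abs_sub_eq_one {d : ℕ} {a b : Fin d → ℕ} (h : GridAdj a b) :
    ∑ i, |(a i : ℚ) - b i| = 1 := by
  obtain ⟨j, hj, hk⟩ := h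
  rw [sum_eq_single j (fun k _ hkj => by simp [hk k hkj]) (by simp)]
  rcases hj with h | h <;> simp [h]

section Interpolation

variable {d N : ℕ} {f : (Fin d → Bool) → ℤ}

theorem abs_cubeDeriv_le_one (hf : ∀ u v : Fin d → Bool, CubeAdj u v → |f u - f v| ≤ 1)
    (j : Fin d) (ε : Fin d → Bool) : |cubeDeriv (fun ε => (f ε : ℚ)) j ε| ≤ 1 := by
  have hadj : CubeAdj (update ε j true) (update ε j false) :=
    ⟨j, by simp, fun k hk => by simp [hk]⟩
  simp only [cubeDeriv]
  exact_mod_cast hf _ _ hadj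

theorem abs_interp_sub_le (hf : ∀ u v : Fin d → Bool, CubeAdj u v → |f u - f v| ≤ 1)
    {a b : Fin d → ℕ} (ha : ∀ i, a i ≤ N) (hb : ∀ i, b i ≤ N) :
    |interp d N f a - interp d N f b| ≤ (∑ i, |(a i : ℚ) - b i|) / N := by
  have hunit {c : Fin d → ℕ} (hc : ∀ i, c i ≤ N) (i : Fin d) : (c i : ℚ) / N ∈ Set.Icc 0 1 :=
    ⟨by positivity, div_le_one_of_le₀ (by exact_mod_cast hc i) N.cast_nonneg⟩
  rw [interp_eq_multilinExt, interp_eq_multilinExt]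
  calc _ ≤ 1 * ∑ i, |(a i : ℚ) / N - b i / N| :=
        abs_multilinExt_sub_le (hunit ha) (hunit hb) (abs_cubeDeriv_le_one hf)
    _ = (∑ i, |(a i : ℚ) - b i|) / N := by
        simp only [one_mul, ← sub_div, abs_div, Nat.abs_cast, sum_div]

theorem abs_interp_sub_le_of_subcube
    (hf : ∀ u v : Fin d → Bool, CubeAdj u v → |f u - f v| ≤ 1) {a b c : Fin d → ℕ}
    (hc : ∀ i, c i + 1 ≤ N) (ha : ∀ i, c i ≤ a i ∧ a i ≤ c i + 1)
    (hb : ∀ i, c i ≤ b i ∧ b i ≤ c i + 1) :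
    |interp d N f a - interp d N f b| ≤ d / N := by
  have hab (i : Fin d) : |(a i : ℚ) - b i| ≤ 1 := by
    obtain ⟨⟨ha₁, ha₂⟩, ⟨hb₁, hb₂⟩⟩ := And.intro (ha i) (hb i)
    have hab : (a i : ℚ) ≤ b i + 1 := by exact_mod_cast (by omega : a i ≤ b i + 1)
    have hba : (b i : ℚ) ≤ a i + 1 := by exact_mod_cast (by omega : b i ≤ a i + 1)
    exact abs_le.mpr ⟨by linarith, by linarith⟩
  calc |interp d N f a - interp d N f b|
      ≤ (∑ i, |(a i : ℚ) - b i|) / N :=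
        abs_interp_sub_le hf (fun i => (ha i).2.trans (hc i)) (fun i => (hb i).2.trans (hc i))
    _ ≤ (∑ _i : Fin d, (1 : ℚ)) / N := by gcongr with i; exact hab i
    _ = d / N := by simp

end Interpolation

theorem floor_interp_estimates_general {d N : ℕ}
    (f : (Fin d → Bool) → ℤ)
    (hf : ∀ u v : Fin d → Bool, CubeAdj u v → |f u - f v| ≤ 1) :
    (∀ a b : Fin d → ℕ, (∀ i, a i ≤ N) → (∀ i, b i ≤ N) → GridAdj a b →
      |⌊interp d N f a⌋ - ⌊interp d N f b⌋| ≤ 1) ∧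
    (d ≤ N → ∀ a b c : Fin d → ℕ, (∀ i, c i + 1 ≤ N) →
      (∀ i, c i ≤ a i ∧ a i ≤ c i + 1) → (∀ i, c i ≤ b i ∧ b i ≤ c i + 1) →
      |⌊interp d N f a⌋ - ⌊interp d N f b⌋| ≤ 1) ∧
    (d ≤ N → ∀ c : Fin d → ℕ, (∀ i, c i + 1 ≤ N) →
      ∃ m : ℤ, ∀ a : Fin d → ℕ, (∀ i, c i ≤ a i ∧ a i ≤ c i + 1) →
        ⌊interp d N f a⌋ = m ∨ ⌊interp d N f a⌋ = m + 1) := by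
  have subcube (hdN : d ≤ N) (a b c : Fin d → ℕ) (hc : ∀ i, c i + 1 ≤ N)
      (ha : ∀ i, c i ≤ a i ∧ a i ≤ c i + 1) (hb : ∀ i, c i ≤ b i ∧ b i ≤ c i + 1) :
      |⌊interp d N f a⌋ - ⌊interp d N f b⌋| ≤ 1 :=
    abs_floor_sub_floor_le_one <| (abs_interp_sub_le_of_subcube hf hc ha hb).trans <|
      div_le_one_of_le₀ (by exact_mod_cast hdN) N.cast_nonneg
  refine ⟨fun a b ha hb hab => abs_floor_sub_floor_le_one ?_, subcube, fun hdN c hc =>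
    Int.exists_eq_or_eq_add_one_of_abs_sub_le_one _
      {a : Fin d → ℕ | ∀ i, c i ≤ a i ∧ a i ≤ c i + 1} fun a ha b hb => subcube hdN a b c hc ha hb⟩
  calc |interp d N f a - interp d N f b| ≤ (∑ i, |(a i : ℚ) - b i|) / N :=
        abs_interp_sub_le hf ha hb
    _ = 1 / N := by rw [hab.sum_abs_sub_eq_one]
    _ ≤ 1 := by rw [one_div]; exact Nat.cast_inv_le_one N

/-- **Statement 9.** With `F` the multilinear interpolation of `f`:
(1) `⌊F⌋` changes by at most `1` along edges of the grid; (2) if `N ≥ d`, `⌊F⌋` varies by at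
most `1` on every unit subcube of the grid; in particular `⌊F⌋` takes at most two consecutive
integer values on each unit subcube. -/
theorem floor_interp_estimates {d N : ℕ} (hd : 1 ≤ d) (hN : 1 ≤ N)
    (f : (Fin d → Bool) → ℤ)
    (hf : ∀ u v : Fin d → Bool, CubeAdj u v → |f u - f v| ≤ 1) :
    (∀ a b : Fin d → ℕ, (∀ i, a i ≤ N) → (∀ i, b i ≤ N) → GridAdj a b →
      |⌊interp d N f a⌋ - ⌊interp d N f b⌋| ≤ 1) ∧
    (d ≤ N → ∀ a b c : Fin d → ℕ, (∀ i, c i + 1 ≤ N) →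
      (∀ i, c i ≤ a i ∧ a i ≤ c i + 1) → (∀ i, c i ≤ b i ∧ b i ≤ c i + 1) →
      |⌊interp d N f a⌋ - ⌊interp d N f b⌋| ≤ 1) ∧
    (d ≤ N → ∀ c : Fin d → ℕ, (∀ i, c i + 1 ≤ N) →
      ∃ m : ℤ, ∀ a : Fin d → ℕ, (∀ i, c i ≤ a i ∧ a i ≤ c i + 1) →
        ⌊interp d N f a⌋ = m ∨ ⌊interp d N f a⌋ = m + 1) :=
  floor_interp_estimates_general f hf

end
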